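/- arXiv:2511.20164 — 2 statements merged into one kernel-verified Lean document; each statement's English description precedes it below -/
import Mathlib

section
/- Let C be a triangulated category, Q the heart of a bounded t-structure on C with cohomology functors H^i : C → Q, and let N ⊆ C be a thick subcategory such that Q ∩ N is a Serre subcategory of Q. If there exists an object B ∈ Q such that N is the smallest thick subcategory of C containing B, then for every object F ∈ N and every i ∈ ℤ one has H^i(F) ∈ N. -/
/-!
For a Serre subcategory `P` of the heart, the objects of `C` all of whose cohomology objects lie
in `P` form a thick subcategory: closure under extensions comes from the long exact cohomology
sequence, since the middle term of an exact sequence `A → M → B` with `A, B ∈ P` is in `P`.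
Taking `P = Q ∩ N`, this thick subcategory contains the generator `B` (its cohomology is `B` in
degree `0` and zero elsewhere), hence contains all of `N`.
-/

open CategoryTheory CategoryTheory.Limits CategoryTheory.Category ZeroObject
  CategoryTheory.Pretriangulated CategoryTheory.Triangulated

namespace PaperFormal

variable {C : Type*} [Category C] [HasZeroObject C] [HasShift C ℤ]
  [Preadditive C] [∀ n : ℤ, (shiftFunctor C n).Additive] [Pretriangulated C]

/-- A thick subcategory of a (pre)triangulated category, encoded as a predicate on objects:
it contains the zero object, and is closed under isomorphisms, shifts, extensions
(in any distinguished triangle, if the two outer objects satisfy the predicate, so does the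
middle one) and direct summands. -/
structure IsThickSubcategory (N : C → Prop) : Prop where
  zero : N 0
  mem_of_iso : ∀ {X Y : C}, (X ≅ Y) → N X → N Y
  shift : ∀ (X : C) (n : ℤ), N X → N (X⟦n⟧)
  ext₂ : ∀ T : Triangle C, (T ∈ distTriang C) → N T.obj₁ → N T.obj₃ → N T.obj₂
  summand : ∀ (X Y : C) (s : X ⟶ Y) (r : Y ⟶ X), s ≫ r = 𝟙 X → N Y → N X

/-- `N` is the smallest thick subcategory of `C` containing the object `A`:
`N` is thick, contains `A`, and is contained in any thick subcategory containing `A`. -/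
def IsThickGeneratedBy (N : C → Prop) (A : C) : Prop :=
  IsThickSubcategory N ∧ N A ∧
    ∀ N' : C → Prop, IsThickSubcategory N' → N' A → ∀ X : C, N X → N' X

/-- A Serre subcategory of an abelian category: a full subcategory (encoded as a predicate
on objects) closed under subobjects, quotients and extensions. -/
structure IsSerreSubcategory {A : Type*} [Category A] [Abelian A] (P : A → Prop) : Prop where
  mem_of_mono : ∀ {X Y : A} (f : X ⟶ Y), Mono f → P Y → P X
  mem_of_epi : ∀ {X Y : A} (f : X ⟶ Y), Epi f → P X → P Y
  mem_of_extension : ∀ S : ShortComplex A, S.ShortExact → P S.X₁ → P S.X₃ → P S.X₂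

/-- The objects of `C` lying in the image of the heart, i.e. isomorphic to the image of an
object of `Q` under the embedding `ι : Q ⥤ C`. -/
def heartProp {Q : Type*} [Category Q] (ι : Q ⥤ C) : C → Prop :=
  fun X => ∃ a : Q, Nonempty (ι.obj a ≅ X)

/-- The data exhibiting an abelian category `Q`, fully faithfully embedded in a
(pre)triangulated category `C` via `ι : Q ⥤ C`, as the heart of a bounded t-structure on `C`,
together with the associated cohomology functors `H^i : C ⥤ Q` and their standard
properties: normalization on the heart, compatibility with shifts, boundedness
(every object has only finitely many nonzero cohomology objects), the long exact
cohomology sequence associated to a distinguished triangle, and the cohomological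
filtration of any object. -/
structure HeartOfBoundedTStructure (Q : Type*) [Category Q] [Abelian Q] (ι : Q ⥤ C) where
  /-- the embedding of the heart is full -/
  full : ι.Full
  /-- the embedding of the heart is faithful -/
  faithful : ι.Faithful
  /-- the underlying t-structure on `C` -/
  t : TStructure C
  /-- the image of `Q` is exactly the heart of the t-structure `t` -/
  heart_iff : ∀ X : C, heartProp ι X ↔ (t.le 0 X ∧ t.ge 0 X)
  /-- the t-structure is bounded -/
  t_bounded : ∀ X : C, (∃ n : ℤ, t.le n X) ∧ (∃ n : ℤ, t.ge n X)
  /-- the cohomology functors `H^i : C ⥤ Q` -/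
  H (i : ℤ) : C ⥤ Q
  H_shift (i n : ℤ) (X : C) : (H i).obj (X⟦n⟧) ≅ (H (i + n)).obj X
  H_heart_zero (a : Q) : (H 0).obj (ι.obj a) ≅ a
  H_heart_ne_zero (a : Q) (i : ℤ) (hi : i ≠ 0) : IsZero ((H i).obj (ι.obj a))
  /-- boundedness: every object has only finitely many nonzero cohomology objects -/
  bounded (X : C) : ∃ a b : ℤ, ∀ i : ℤ, (i < a ∨ b < i) → IsZero ((H i).obj X)
  /-- connecting morphisms of the long exact cohomology sequence -/
  δ (T : Triangle C) (hT : T ∈ distTriang C) (i : ℤ) :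
    (H i).obj T.obj₃ ⟶ (H (i + 1)).obj T.obj₁
  comp_zero₁ (T : Triangle C) (hT : T ∈ distTriang C) (i : ℤ) :
    (H i).map T.mor₁ ≫ (H i).map T.mor₂ = 0
  comp_zero₂ (T : Triangle C) (hT : T ∈ distTriang C) (i : ℤ) :
    (H i).map T.mor₂ ≫ δ T hT i = 0
  comp_zero₃ (T : Triangle C) (hT : T ∈ distTriang C) (i : ℤ) :
    δ T hT i ≫ (H (i + 1)).map T.mor₁ = 0
  exact₁ (T : Triangle C) (hT : T ∈ distTriang C) (i : ℤ) :
    (ShortComplex.mk _ _ (comp_zero₁ T hT i)).Exact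
  exact₂ (T : Triangle C) (hT : T ∈ distTriang C) (i : ℤ) :
    (ShortComplex.mk _ _ (comp_zero₂ T hT i)).Exact
  exact₃ (T : Triangle C) (hT : T ∈ distTriang C) (i : ℤ) :
    (ShortComplex.mk _ _ (comp_zero₃ T hT i)).Exact
  /-- every object admits a finite filtration with subquotients the shifted
  cohomology objects `H^k(X)⟦-k⟧` -/
  filtration (X : C) : ∃ (a b : ℤ) (F : ℤ → C), IsZero (F (a - 1)) ∧ Nonempty (F b ≅ X) ∧
    ∀ k : ℤ, ∃ (f : F (k - 1) ⟶ F k) (g : F k ⟶ (ι.obj ((H k).obj X))⟦(-k)⟧)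
      (h : (ι.obj ((H k).obj X))⟦(-k)⟧ ⟶ (F (k - 1))⟦(1 : ℤ)⟧),
      Triangle.mk f g h ∈ distTriang C

/-- A full subcategory of `C` (encoded as a predicate on objects) is the heart of a
bounded t-structure on `C`. -/
def IsHeartOfBoundedTStructure (P : C → Prop) : Prop :=
  ∃ t : TStructure C,
    (∀ X : C, (∃ n : ℤ, t.le n X) ∧ (∃ n : ℤ, t.ge n X)) ∧
    (∀ X : C, P X ↔ (t.le 0 X ∧ t.ge 0 X))

theorem IsSerreSubcategory.isSerreClass {A : Type*} [Category A] [Abelian A] {P : A → Prop}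
    (hP : IsSerreSubcategory P) {Y : A} (hY : P Y) : ObjectProperty.IsSerreClass P where
  exists_zero := ⟨0, isZero_zero A, hP.mem_of_mono (0 : 0 ⟶ Y) inferInstance hY⟩
  prop_of_mono f _ := hP.mem_of_mono f inferInstance
  prop_of_epi f _ := hP.mem_of_epi f inferInstance
  prop_X₂_of_shortExact hS := hP.mem_of_extension _ hS

namespace HeartOfBoundedTStructure

variable {Q : Type*} [Category Q] [Abelian Q] {ι : Q ⥤ C} (hQ : HeartOfBoundedTStructure Q ι)

def cohomologyIn (P : Q → Prop) (X : C) : Prop :=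
  ∀ i : ℤ, P ((hQ.H i).obj X)

/-- `H i` is not assumed additive; exactness on the contractible triangle of `0` forces
`𝟙 ≫ 𝟙 = 0` on `H i 0`. -/
theorem isZero_H_obj_zero (i : ℤ) : IsZero ((hQ.H i).obj 0) := by
  have h : (hQ.H i).map (𝟙 (0 : C)) ≫ (hQ.H i).map (0 : (0 : C) ⟶ 0) = 0 :=
    hQ.comp_zero₁ _ (contractible_distinguished 0) i
  rw [(isZero_zero C).eq_of_src (0 : (0 : C) ⟶ 0) (𝟙 0), CategoryTheory.Functor.map_id,
    comp_id] at h
  exact (IsZero.iff_id_eq_zero _).2 h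

variable {P : Q → Prop} [ObjectProperty.IsSerreClass P]

theorem isThickSubcategory_cohomologyIn : IsThickSubcategory (hQ.cohomologyIn P) where
  zero i := ObjectProperty.prop_of_isZero P (hQ.isZero_H_obj_zero i)
  mem_of_iso e hX i := ObjectProperty.prop_of_iso P ((hQ.H i).mapIso e) (hX i)
  shift X n hX i := ObjectProperty.prop_of_iso P (hQ.H_shift i n X).symm (hX (i + n))
  ext₂ T hT h₁ h₃ i := ObjectProperty.prop_X₂_of_exact P (hQ.exact₁ T hT i) (h₁ i) (h₃ i)
  summand X Y s r hsr hY i := by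
    have : IsSplitMono s := .mk' ⟨r, hsr⟩
    exact ObjectProperty.prop_of_mono P ((hQ.H i).map s) (hY i)

theorem cohomologyIn_obj {a : Q} (ha : P a) : hQ.cohomologyIn P (ι.obj a) := by
  intro i
  by_cases hi : i = 0
  · subst hi
    exact ObjectProperty.prop_of_iso P (hQ.H_heart_zero a).symm ha
  · exact ObjectProperty.prop_of_isZero P (hQ.H_heart_ne_zero a i hi)

end HeartOfBoundedTStructure

theorem statement_1_general
    (Q : Type*) [Category Q] [Abelian Q] (ι : Q ⥤ C)
    (hQ : HeartOfBoundedTStructure Q ι)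
    (N : C → Prop)
    (hSerre : IsSerreSubcategory (fun a : Q => N (ι.obj a)))
    (B : Q) (hB : IsThickGeneratedBy N (ι.obj B)) :
    ∀ F : C, N F → ∀ i : ℤ, N (ι.obj ((hQ.H i).obj F)) := by
  have := hSerre.isSerreClass hB.2.1
  exact hB.2.2 (hQ.cohomologyIn fun a => N (ι.obj a)) hQ.isThickSubcategory_cohomologyIn
    (hQ.cohomologyIn_obj hB.2.1)

theorem statement_1 [IsTriangulated C]
    (Q : Type*) [Category Q] [Abelian Q] (ι : Q ⥤ C)
    (hQ : HeartOfBoundedTStructure Q ι)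
    (N : C → Prop) (hN : IsThickSubcategory N)
    (hSerre : IsSerreSubcategory (fun a : Q => N (ι.obj a)))
    (B : Q) (hB : IsThickGeneratedBy N (ι.obj B)) :
    ∀ F : C, N F → ∀ i : ℤ, N (ι.obj ((hQ.H i).obj F)) :=
  statement_1_general Q ι hQ N hSerre B hB

end PaperFormal
end

section
/- Let C be a triangulated category, Q the heart of a bounded t-structure on C with cohomology functors H^i : C → Q, and let N ⊆ C be a thick subcategory such that Q ∩ N is a Serre subcategory of Q. Then the full subcategory C_0 := { F ∈ C | H^i(F) ∈ N for all i ∈ ℤ } is a thick subcategory of C; that is, C_0 is closed under shifts, under cones of morphisms between its objects (equivalently, in any distinguished triangle F_1 → F_2 → F_3 with two of the vertices in C_0, the third vertex also lies in C_0), and under direct summands. -/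
open CategoryTheory CategoryTheory.Limits CategoryTheory.Category ZeroObject
  CategoryTheory.Pretriangulated CategoryTheory.Triangulated

namespace PaperFormal

variable {C : Type*} [Category C] [HasZeroObject C] [HasShift C ℤ]
  [Preadditive C] [∀ n : ℤ, (shiftFunctor C n).Additive] [Pretriangulated C]

/-!
In any distinguished triangle `F₁ ⟶ F₂ ⟶ F₃`, exactness of `H^i(F₁) ⟶ H^i(F₂) ⟶ H^i(F₃)` makes
`H^i(F₂)` an extension of a subobject of `H^i(F₃)` by a quotient of `H^i(F₁)`, so the Serre
property of `Q ∩ N` gives extension-closure. Shifts only reindex cohomology, and a retract of `F`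
has cohomology a retract, hence a subobject, of that of `F`.
-/

lemma IsThickSubcategory.mem_of_isZero {N : C → Prop} (hN : IsThickSubcategory N) {X : C}
    (hX : IsZero X) : N X :=
  hN.mem_of_iso hX.isoZero.symm hN.zero

section Serre

variable {A : Type*} [Category A] [Abelian A] {P : A → Prop}

lemma IsSerreSubcategory.mem_of_exact (hP : IsSerreSubcategory P) {S : ShortComplex A}
    (hS : S.Exact) (h₁ : P S.X₁) (h₃ : P S.X₃) : P S.X₂ := by
  let h := S.homologyData
  exact hP.mem_of_extension (.mk h.left.i h.right.p _) (hS.shortExact h)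
    (hP.mem_of_epi h.left.f' (hS.epi_f' h.left) h₁)
    (hP.mem_of_mono h.right.g' (hS.mono_g' h.right) h₃)

lemma IsSerreSubcategory.mem_of_retract (hP : IsSerreSubcategory P) {X Y : A}
    (h : Retract X Y) (hY : P Y) : P X :=
  hP.mem_of_mono h.i inferInstance hY

end Serre

lemma HeartOfBoundedTStructure.isZero_H_obj_zero_s3 {Q : Type*} [Category Q] [Abelian Q]
    {ι : Q ⥤ C} (hQ : HeartOfBoundedTStructure Q ι) (i : ℤ) : IsZero ((hQ.H i).obj 0) := by
  -- both maps of the contractible triangle on `0` are `𝟙 0`, so `𝟙 ≫ 𝟙 = 0` after applying `H i`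
  have hcomp : (hQ.H i).map (𝟙 (0 : C)) ≫ (hQ.H i).map (0 : (0 : C) ⟶ 0) = 0 :=
    hQ.comp_zero₁ _ (contractible_distinguished (0 : C)) i
  rw [Subsingleton.elim (0 : (0 : C) ⟶ 0) (𝟙 0), (hQ.H i).map_id, comp_id] at hcomp
  exact (IsZero.iff_id_eq_zero _).2 hcomp

theorem statement_3_general
    (Q : Type*) [Category Q] [Abelian Q] (ι : Q ⥤ C)
    (hQ : HeartOfBoundedTStructure Q ι)
    (N : C → Prop) (hN : IsThickSubcategory N)
    (hSerre : IsSerreSubcategory (fun a : Q => N (ι.obj a))) :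
    IsThickSubcategory (fun F : C => ∀ i : ℤ, N (ι.obj ((hQ.H i).obj F))) := by
  have := hQ.full
  refine ⟨fun i => hN.mem_of_isZero (ι.map_isZero (hQ.isZero_H_obj_zero_s3 i)), ?_, ?_, ?_, ?_⟩
  · intro X Y e hX i
    exact hN.mem_of_iso (ι.mapIso ((hQ.H i).mapIso e)) (hX i)
  · intro X n hX i
    exact hN.mem_of_iso (ι.mapIso (hQ.H_shift i n X).symm) (hX (i + n))
  · intro T hT h₁ h₃ i
    exact hSerre.mem_of_exact (hQ.exact₁ T hT i) (h₁ i) (h₃ i)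
  · intro X Y s r hsr hY i
    exact hSerre.mem_of_retract ((Retract.mk s r hsr).map (hQ.H i)) (hY i)

theorem statement_3 [IsTriangulated C]
    (Q : Type*) [Category Q] [Abelian Q] (ι : Q ⥤ C)
    (hQ : HeartOfBoundedTStructure Q ι)
    (N : C → Prop) (hN : IsThickSubcategory N)
    (hSerre : IsSerreSubcategory (fun a : Q => N (ι.obj a))) :
    IsThickSubcategory (fun F : C => ∀ i : ℤ, N (ι.obj ((hQ.H i).obj F))) :=
  statement_3_general Q ι hQ N hN hSerre

end PaperFormal
end
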